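/- arXiv:2511.18813 — 4 statements merged into one kernel-verified Lean document; each statement's English description precedes it below -/
import Mathlib

section
/- For k = 1,…,L let σ_k : ℝ → ℝ be 1-Lipschitz, let W_k be a real h_k × h_{k−1} matrix and b_k ∈ ℝ^{h_k}, and let f_k(x) = σ_k(W_k x + b_k) with σ_k applied entrywise. Set A_k = max_j Σ_i |W_k(j,i)| and C_ℓ = max_{j,i} |W_ℓ(j,i)|. Define the ℓ-th activation edge-weight map Φ_ℓ : ℝ^{h_0} → ℝ^{h_ℓ × h_{ℓ−1}} by Φ_ℓ(x)(j,i) = |W_ℓ(j,i) · (f_{ℓ−1} ∘ ⋯ ∘ f_1(x))(i)|. Then for all x, y ∈ ℝ^{h_0}, max_{j,i} |Φ_ℓ(x)(j,i) − Φ_ℓ(y)(j,i)| ≤ C_ℓ · (∏_{k=1}^{ℓ−1} A_k) · ‖x − y‖_∞. -/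
/-! Each layer multiplies sup-distances by at most the maximal absolute row sum `A k`
of its weight matrix, since the activation is 1-Lipschitz and
`|∑ᵢ W j i uᵢ| ≤ (∑ᵢ |W j i|) ‖u‖`. Hence the layer inputs `F ℓ x` and `F ℓ y` are
`(∏_{k<ℓ} A k) ‖x - y‖`-close, and by the reverse triangle inequality each edge weight
moves by at most `|W ℓ j i|` times that. -/

open Finset Matrix

section Layer

variable {m n : Type*} [Fintype n]

def denseLayer (σ : ℝ → ℝ) (M : Matrix m n ℝ) (c : m → ℝ) (u : n → ℝ) : m → ℝ :=
  fun j => σ ((M *ᵥ u) j + c j)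

lemma abs_mulVec_sub_mulVec_le (M : Matrix m n ℝ) (u v : n → ℝ) (j : m) :
    |(M *ᵥ u) j - (M *ᵥ v) j| ≤ (∑ i, |M j i|) * ‖u - v‖ := by
  rw [← Pi.sub_apply, ← mulVec_sub, mulVec, dotProduct, sum_mul]
  refine (abs_sum_le_sum_abs _ _).trans (sum_le_sum fun i _ => ?_)
  rw [abs_mul]
  gcongr
  exact norm_le_pi_norm (u - v) i

lemma norm_denseLayer_sub_le [Fintype m] {σ : ℝ → ℝ} (hσ : ∀ s t, |σ s - σ t| ≤ |s - t|)
    {M : Matrix m n ℝ} {a : ℝ} (ha : 0 ≤ a) (hM : ∀ j, ∑ i, |M j i| ≤ a) (c : m → ℝ)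
    (u v : n → ℝ) :
    ‖denseLayer σ M c u - denseLayer σ M c v‖ ≤ a * ‖u - v‖ := by
  refine (pi_norm_le_iff_of_nonneg (by positivity)).2 fun j => ?_
  calc ‖(denseLayer σ M c u - denseLayer σ M c v) j‖
      = |σ ((M *ᵥ u) j + c j) - σ ((M *ᵥ v) j + c j)| := rfl
    _ ≤ |(M *ᵥ u) j - (M *ᵥ v) j| := (hσ _ _).trans_eq (by rw [add_sub_add_right_eq_sub])
    _ ≤ (∑ i, |M j i|) * ‖u - v‖ := abs_mulVec_sub_mulVec_le M u v j
    _ ≤ a * ‖u - v‖ := by gcongr; exact hM j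

end Layer

lemma le_prod_range_mul_of_le_mul {d A : ℕ → ℝ} (hA : ∀ k, 0 ≤ A k)
    (hd : ∀ k, d (k + 1) ≤ A k * d k) (ℓ : ℕ) :
    d ℓ ≤ (∏ k ∈ range ℓ, A k) * d 0 := by
  induction ℓ with
  | zero => simp
  | succ ℓ ih =>
    calc d (ℓ + 1) ≤ A ℓ * d ℓ := hd ℓ
      _ ≤ A ℓ * ((∏ k ∈ range ℓ, A k) * d 0) := by gcongr; exact hA ℓ
      _ = (∏ k ∈ range (ℓ + 1), A k) * d 0 := by rw [prod_range_succ]; ring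

lemma abs_abs_mul_sub_abs_mul_le (w s t : ℝ) : |(|w * s| - |w * t|)| ≤ |w| * |s - t| := by
  rw [← abs_mul, mul_sub]
  exact abs_abs_sub_abs_le_abs_sub _ _

/-- For layers `f k x = σ k (W k x + b k)` with 1-Lipschitz activations
(here `f k` is the `(k+1)`-th layer of the paper), the activation edge-weight map
`Φ x j i = |W ℓ j i * (F ℓ x) i|` of the `(ℓ+1)`-th layer (whose layer input
`F ℓ x` is the composition of the first `ℓ` layers applied to `x`) satisfies
`max_{j,i} |Φ x j i - Φ y j i| ≤ C ℓ * (∏_{k<ℓ} A k) * ‖x - y‖_∞`, where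
`A k = max_j Σ_i |W k j i|` and `C ℓ = max_{j,i} |W ℓ j i|`. -/
theorem activation_edge_weight_map_lipschitz
    (h : ℕ → ℕ) (hpos : ∀ k, 0 < h k)
    (σ : ℕ → ℝ → ℝ) (hσ : ∀ (k : ℕ) (s t : ℝ), |σ k s - σ k t| ≤ |s - t|)
    (W : (k : ℕ) → Matrix (Fin (h (k + 1))) (Fin (h k)) ℝ)
    (b : (k : ℕ) → Fin (h (k + 1)) → ℝ)
    (f : (k : ℕ) → (Fin (h k) → ℝ) → (Fin (h (k + 1)) → ℝ))
    (hf : ∀ (k : ℕ) (x : Fin (h k) → ℝ) (j : Fin (h (k + 1))),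
      f k x j = σ k ((W k).mulVec x j + b k j))
    (A : ℕ → ℝ)
    (hA : ∀ k, A k = Finset.univ.sup'
        (Finset.univ_nonempty_iff.mpr ⟨⟨0, hpos (k + 1)⟩⟩)
        (fun j : Fin (h (k + 1)) => ∑ i : Fin (h k), |W k j i|))
    (F : (ℓ : ℕ) → (Fin (h 0) → ℝ) → (Fin (h ℓ) → ℝ))
    (hF0 : ∀ x, F 0 x = x)
    (hFs : ∀ (ℓ : ℕ) (x : Fin (h 0) → ℝ), F (ℓ + 1) x = f ℓ (F ℓ x))
    (ℓ : ℕ)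
    (C : ℝ)
    (hC : C = Finset.univ.sup'
        (Finset.univ_nonempty_iff.mpr ⟨⟨⟨0, hpos (ℓ + 1)⟩, ⟨0, hpos ℓ⟩⟩⟩)
        (fun p : Fin (h (ℓ + 1)) × Fin (h ℓ) => |W ℓ p.1 p.2|))
    (Φ : (Fin (h 0) → ℝ) → Fin (h (ℓ + 1)) → Fin (h ℓ) → ℝ)
    (hΦ : ∀ (x : Fin (h 0) → ℝ) (j : Fin (h (ℓ + 1))) (i : Fin (h ℓ)),
      Φ x j i = |W ℓ j i * F ℓ x i|) :
    ∀ x y : Fin (h 0) → ℝ,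
      Finset.univ.sup'
        (Finset.univ_nonempty_iff.mpr ⟨⟨⟨0, hpos (ℓ + 1)⟩, ⟨0, hpos ℓ⟩⟩⟩)
        (fun p : Fin (h (ℓ + 1)) × Fin (h ℓ) => |Φ x p.1 p.2 - Φ y p.1 p.2|)
      ≤ C * (∏ k ∈ Finset.range ℓ, A k) * ‖x - y‖ := by
  intro x y
  have hlayer : ∀ k, f k = denseLayer (σ k) (W k) (b k) := fun k => funext₂ (hf k)
  have hrow : ∀ k j, ∑ i, |W k j i| ≤ A k := fun k j => by
    rw [hA k]; exact le_sup' (fun j => ∑ i, |W k j i|) (mem_univ j)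
  have hA_nonneg : ∀ k, 0 ≤ A k := fun k =>
    (sum_nonneg fun _ _ => abs_nonneg _).trans (hrow k ⟨0, hpos (k + 1)⟩)
  have hF : ‖F ℓ x - F ℓ y‖ ≤ (∏ k ∈ range ℓ, A k) * ‖x - y‖ := by
    simpa only [hF0] using le_prod_range_mul_of_le_mul (d := fun k => ‖F k x - F k y‖)
      hA_nonneg (fun k => by
        simpa only [hFs, hlayer] using norm_denseLayer_sub_le (hσ k) (hA_nonneg k) (hrow k)
          (b k) (F k x) (F k y)) ℓ
  refine sup'_le _ _ fun ⟨j, i⟩ _ => ?_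
  have hWC : |W ℓ j i| ≤ C := by
    rw [hC]
    exact le_sup' (fun p : Fin (h (ℓ + 1)) × Fin (h ℓ) => |W ℓ p.1 p.2|) (mem_univ (j, i))
  have hC_nonneg : 0 ≤ C := (abs_nonneg _).trans hWC
  calc |Φ x j i - Φ y j i| ≤ |W ℓ j i| * |F ℓ x i - F ℓ y i| := by
        simpa only [hΦ] using abs_abs_mul_sub_abs_mul_le (W ℓ j i) (F ℓ x i) (F ℓ y i)
    _ ≤ C * ‖F ℓ x - F ℓ y‖ :=
        mul_le_mul hWC (norm_le_pi_norm (F ℓ x - F ℓ y) i) (abs_nonneg _) hC_nonneg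
    _ ≤ C * ((∏ k ∈ range ℓ, A k) * ‖x - y‖) := by gcongr
    _ = C * (∏ k ∈ range ℓ, A k) * ‖x - y‖ := (mul_assoc _ _ _).symm
end

section
/- Let u, v : Fin n → ℝ both be monotone nondecreasing, let p ≥ 1 be a real number, and let π be any permutation of Fin n. Then Σ_{i} |u(i) − v(i)|^p ≤ Σ_{i} |u(i) − v(π(i))|^p. In particular, among all bijective matchings between the entries of two sorted tuples, the identity (order-preserving) matching minimizes the sum of p-th powers of absolute differences. -/
/-!
Convexity of `x ↦ |x| ^ p` makes the cost `c a b = |a - b| ^ p` satisfy the Monge condition: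
for `a ≤ a'` and `b ≤ b'`, uncrossing the matching `a ↦ b', a' ↦ b` into `a ↦ b, a' ↦ b'` does
not increase the cost. Uncrossing a permutation at the least index it moves fixes that index
and moves nothing new, so finitely many uncrossings lead from `π` to the identity.
-/

open Finset Equiv

theorem convexOn_abs_rpow {p : ℝ} (hp : 1 ≤ p) : ConvexOn ℝ Set.univ fun x : ℝ ↦ |x| ^ p := by
  refine ⟨convex_univ, fun x _ y _ a b ha hb hab ↦ ?_⟩
  calc |a • x + b • y| ^ p ≤ (a • |x| + b • |y|) ^ p := by
        refine Real.rpow_le_rpow (abs_nonneg _) ?_ (by linarith)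
        simpa [abs_of_nonneg ha, abs_of_nonneg hb] using abs_add_le (a * x) (b * y)
    _ ≤ a • |x| ^ p + b • |y| ^ p :=
        (convexOn_rpow hp).2 (abs_nonneg x) (abs_nonneg y) ha hb hab

def IsMongeCost {α β M : Type*} [Preorder α] [Preorder β] [Add M] [LE M] (c : α → β → M) :
    Prop :=
  ∀ ⦃a a' b b'⦄, a ≤ a' → b ≤ b' → c a b + c a' b' ≤ c a b' + c a' b

section Convex

variable {𝕜 : Type*} [Field 𝕜] [LinearOrder 𝕜] [IsStrictOrderedRing 𝕜]

theorem ConvexOn.map_add_map_le_of_mem_Icc {s : Set 𝕜} {f : 𝕜 → 𝕜} (hf : ConvexOn 𝕜 s f)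
    {x y z : 𝕜} (hx : x ∈ s) (hy : y ∈ s) (hz : z ∈ Set.Icc x y) :
    f z + f (x + y - z) ≤ f x + f y := by
  obtain ⟨hxz, hzy⟩ := hz
  rcases (hxz.trans hzy).eq_or_lt with rfl | hxy
  · obtain rfl : z = x := le_antisymm hzy hxz
    simp
  have hyx : 0 < y - x := sub_pos.2 hxy
  have ha : 0 ≤ (y - z) / (y - x) := div_nonneg (sub_nonneg.2 hzy) hyx.le
  have hb : 0 ≤ (z - x) / (y - x) := div_nonneg (sub_nonneg.2 hxz) hyx.le
  have hab : (y - z) / (y - x) + (z - x) / (y - x) = 1 := by field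
  -- `z` and `x + y - z` are the two mirror-image convex combinations of `x` and `y`.
  have hfz := hf.2 hx hy ha hb hab
  have hfz' := hf.2 hx hy hb ha (by rw [add_comm, hab])
  simp only [smul_eq_mul] at hfz hfz'
  rw [show (y - z) / (y - x) * x + (z - x) / (y - x) * y = z by field] at hfz
  rw [show (z - x) / (y - x) * x + (y - z) / (y - x) * y = x + y - z by field] at hfz'
  linear_combination hfz + hfz' + (f x + f y) * hab

theorem ConvexOn.isMongeCost_comp_sub {f : 𝕜 → 𝕜} (hf : ConvexOn 𝕜 Set.univ f) :
    IsMongeCost fun a b : 𝕜 ↦ f (a - b) := by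
  intro a a' b b' ha hb
  have key := hf.map_add_map_le_of_mem_Icc (Set.mem_univ (a - b')) (Set.mem_univ (a' - b))
    (z := a - b) ⟨by linarith, by linarith⟩
  rwa [show a - b' + (a' - b) - (a - b) = a' - b' by ring] at key

end Convex

namespace IsMongeCost

variable {ι α β M : Type*} [Fintype ι] [Preorder α] [Preorder β]
  [AddCommMonoid M] [PartialOrder M] [IsOrderedAddMonoid M] {c : α → β → M}

theorem sum_comp_swap_le [DecidableEq ι] (hc : IsMongeCost c) {u : ι → α} {w : ι → β}
    {i j : ι} (hu : u i ≤ u j) (hw : w j ≤ w i) :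
    ∑ k, c (u k) (w (swap i j k)) ≤ ∑ k, c (u k) (w k) := by
  rcases eq_or_ne i j with rfl | hij
  · simp
  rw [← sum_add_sum_compl {i, j}, ← sum_add_sum_compl {i, j} fun k ↦ c (u k) (w k),
    sum_pair hij, sum_pair hij, swap_apply_left, swap_apply_right]
  refine add_le_add (hc hu hw) (sum_congr rfl fun k hk ↦ ?_).le
  simp only [mem_compl, mem_insert, mem_singleton, not_or] at hk
  rw [swap_apply_of_ne_of_ne hk.1 hk.2]

theorem sum_le_sum_comp_perm [LinearOrder ι] (hc : IsMongeCost c) {u : ι → α} {v : ι → β}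
    (hu : Monotone u) (hv : Monotone v) (π : Perm ι) :
    ∑ i, c (u i) (v i) ≤ ∑ i, c (u i) (v (π i)) := by
  induction h : π.support.card using Nat.strong_induction_on generalizing π with
  | _ n ih =>
  rcases eq_or_ne π 1 with rfl | hπ
  · simp
  have hsupp : π.support.Nonempty := nonempty_iff_ne_empty.2 (Perm.support_eq_empty_iff.not.2 hπ)
  set i := π.support.min' hsupp
  set j := π.symm i
  have hi : π i ≠ i := Perm.mem_support.1 (min'_mem _ _)
  have hπj : π j = i := π.apply_symm_apply i
  have hij : i ≤ j := min'_le _ _ <| Perm.mem_support.2 fun hj ↦ hi <| by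
    rw [← hj.symm.trans hπj]; exact hj
  have hiπi : i ≤ π i := min'_le _ _ <| Perm.mem_support.2 (π.injective.ne hi)
  have hswap : π * swap i j = swap i (π i) * π := by
    rw [mul_swap_eq_swap_mul, hπj, swap_comm]
  calc ∑ k, c (u k) (v k) ≤ ∑ k, c (u k) (v ((π * swap i j) k)) :=
        ih _ (h ▸ hswap ▸ Perm.card_support_swap_mul hi) _ rfl
    _ ≤ ∑ k, c (u k) (v (π k)) := hc.sum_comp_swap_le (w := v ∘ π) (hu hij) (hv (hπj ▸ hiπi))

end IsMongeCost

/-- For monotone nondecreasing tuples `u, v : Fin n → ℝ`, a real exponent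
`p ≥ 1`, and any permutation `π` of `Fin n`, the order-preserving (identity) matching
minimizes the sum of `p`-th powers of absolute differences:
`Σ_i |u i - v i|^p ≤ Σ_i |u i - v (π i)|^p`. (Here `^` is the real power `rpow`.) -/
theorem sorted_matching_minimizes_p_cost
    (n : ℕ) (u v : Fin n → ℝ) (hu : Monotone u) (hv : Monotone v)
    (p : ℝ) (hp : 1 ≤ p) (π : Equiv.Perm (Fin n)) :
    ∑ i : Fin n, |u i - v i| ^ p ≤ ∑ i : Fin n, |u i - v (π i)| ^ p :=
  (convexOn_abs_rpow hp).isMongeCost_comp_sub.sum_le_sum_comp_perm hu hv π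
end

section
/- Let u, v : Fin n → ℝ both be monotone nondecreasing and let π be any permutation of Fin n. Then max_{i} |u(i) − v(i)| ≤ max_{i} |u(i) − v(π(i))|. In particular, among all bijective matchings between the entries of two sorted tuples, the identity (order-preserving) matching minimizes the maximum absolute difference. -/
lemma perm_exists_ge {n : ℕ} (π : Equiv.Perm (Fin n)) (i : Fin n) :
    ∃ j, i ≤ j ∧ π j ≤ i := by
  by_contra h
  push_neg at h
  have hsub : (Finset.univ.filter (fun j => π j ≤ i)) ⊆
      (Finset.univ.filter (fun j => j < i)) := by
    intro j hj
    simp only [Finset.mem_filter, Finset.mem_univ, true_and] at *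
    by_contra hji
    exact absurd hj (not_le.mpr (h j (le_of_not_gt hji)))
  have hc1 : (Finset.univ.filter (fun j => π j ≤ i)).card = i.1 + 1 := by
    rw [← Fin.card_Iic i]
    apply Finset.card_bij' (fun j _ => π j) (fun k _ => π.symm k) <;>
      simp [Finset.mem_filter]
  have hc2 : (Finset.univ.filter (fun j => j < i)).card = i.1 := by
    have : (Finset.univ.filter (fun j => j < i)) = Finset.Iio i := by
      ext j; simp
    rw [this, Fin.card_Iio]
  have := Finset.card_le_card hsub
  omega

/-- For monotone nondecreasing tuples `u, v : Fin n → ℝ` and any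
permutation `π` of `Fin n`, the order-preserving (identity) matching minimizes the
maximum absolute difference: `max_i |u i - v i| ≤ max_i |u i - v (π i)|`. -/
theorem sorted_matching_minimizes_bottleneck_cost
    (n : ℕ) (hn : 0 < n) (u v : Fin n → ℝ) (hu : Monotone u) (hv : Monotone v)
    (π : Equiv.Perm (Fin n)) :
    Finset.univ.sup' (Finset.univ_nonempty_iff.mpr ⟨⟨0, hn⟩⟩)
        (fun i : Fin n => |u i - v i|)
      ≤ Finset.univ.sup' (Finset.univ_nonempty_iff.mpr ⟨⟨0, hn⟩⟩)
        (fun i : Fin n => |u i - v (π i)|) := by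
  apply Finset.sup'_le
  intro i _
  obtain ⟨j, hij, hji⟩ := perm_exists_ge π i
  obtain ⟨k, hik, hki⟩ := perm_exists_ge π⁻¹ i
  rw [abs_sub_le_iff]
  constructor
  · calc u i - v i ≤ u j - v (π j) := by
          have := hu hij; have := hv hji; linarith
      _ ≤ |u j - v (π j)| := le_abs_self _
      _ ≤ _ := Finset.le_sup' (fun i => |u i - v (π i)|) (Finset.mem_univ j)
  · calc v i - u i ≤ v (π (π⁻¹ k)) - u (π⁻¹ k) := by
          have := hu hki
          have : v i ≤ v (π (π⁻¹ k)) := by simpa using hv hik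
          linarith
      _ ≤ |u (π⁻¹ k) - v (π (π⁻¹ k))| := by rw [abs_sub_comm]; exact le_abs_self _
      _ ≤ _ := Finset.le_sup' (fun i => |u i - v (π i)|) (Finset.mem_univ (π⁻¹ k))
end

section
/- Let (Θ, 𝒜, π) be a probability space, N ≥ 1, and let D₁, D₂ : Θ → ℝ^N be measurable. Suppose there are constants R ≥ 0 and δ ≥ 0 such that for π-almost every θ: ‖D₁(θ)‖_∞ ≤ R, ‖D₂(θ)‖_∞ ≤ R, and ‖D₁(θ) − D₂(θ)‖_∞ ≤ δ. Let m₁ = ∫ D₁ dπ and m₂ = ∫ D₂ dπ, and define V_i = (1/N) ∫ ‖D_i(θ) − m_i‖₂² dπ(θ) for i = 1, 2, where ‖·‖₂ is the Euclidean norm. Then |V₁ − V₂| ≤ 4 R δ. -/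
open MeasureTheory

lemma sq_diff_abs_bound {a b R δ : ℝ} (ha : |a| ≤ R) (hb : |b| ≤ R)
    (hd : |a - b| ≤ δ) : |a ^ 2 - b ^ 2| ≤ 2 * R * δ := by
  have h : a ^ 2 - b ^ 2 = (a + b) * (a - b) := by ring
  rw [h, abs_mul]
  have h1 : |a + b| ≤ 2 * R := by
    calc |a + b| ≤ |a| + |b| := abs_add_le a b
    _ ≤ 2 * R := by linarith
  have hR0 : (0:ℝ) ≤ 2 * R := by have := abs_nonneg a; linarith
  exact mul_le_mul h1 hd (abs_nonneg _) hR0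


/-- Let `D₁, D₂ : Θ → ℝ^N` be measurable maps on a probability space
with, π-a.e., `‖D₁ θ‖_∞ ≤ R`, `‖D₂ θ‖_∞ ≤ R` and `‖D₁ θ - D₂ θ‖_∞ ≤ δ` (the norm on
`Fin N → ℝ` is the sup norm).  With `m_i = ∫ D_i dπ` and
`V_i = (1/N) ∫ ‖D_i - m_i‖₂² dπ` (the Euclidean squared norm written as a coordinate
sum of squares), one has `|V₁ - V₂| ≤ 4 R δ`. -/
theorem per_layer_variance_lipschitz_bound
    {Θ : Type*} [MeasurableSpace Θ] (π : Measure Θ) [IsProbabilityMeasure π]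
    (N : ℕ) (hN : 1 ≤ N)
    (D₁ D₂ : Θ → Fin N → ℝ)
    (h₁meas : Measurable D₁) (h₂meas : Measurable D₂)
    (R δ : ℝ) (hR : 0 ≤ R) (hδ : 0 ≤ δ)
    (hbound : ∀ᵐ θ ∂π, ‖D₁ θ‖ ≤ R ∧ ‖D₂ θ‖ ≤ R ∧ ‖D₁ θ - D₂ θ‖ ≤ δ)
    (m₁ m₂ : Fin N → ℝ)
    (hm₁ : m₁ = ∫ θ, D₁ θ ∂π) (hm₂ : m₂ = ∫ θ, D₂ θ ∂π)
    (V₁ V₂ : ℝ)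
    (hV₁ : V₁ = (1 / (N : ℝ)) * ∫ θ, ∑ j : Fin N, (D₁ θ j - m₁ j) ^ 2 ∂π)
    (hV₂ : V₂ = (1 / (N : ℝ)) * ∫ θ, ∑ j : Fin N, (D₂ θ j - m₂ j) ^ 2 ∂π) :
    |V₁ - V₂| ≤ 4 * R * δ := by
  -- coordinatewise a.e. bounds
  have hb1 : ∀ᵐ θ ∂π, ∀ j, |D₁ θ j| ≤ R := by
    filter_upwards [hbound] with θ h j
    exact le_trans (norm_le_pi_norm (D₁ θ) j) h.1
  have hb2 : ∀ᵐ θ ∂π, ∀ j, |D₂ θ j| ≤ R := by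
    filter_upwards [hbound] with θ h j
    exact le_trans (norm_le_pi_norm (D₂ θ) j) h.2.1
  have hbd : ∀ᵐ θ ∂π, ∀ j, |D₁ θ j - D₂ θ j| ≤ δ := by
    filter_upwards [hbound] with θ h j
    exact le_trans (norm_le_pi_norm (D₁ θ - D₂ θ) j) h.2.2
  -- integrability of vector functions
  have hInt1 : Integrable D₁ π :=
    ⟨h₁meas.aestronglyMeasurable,
      HasFiniteIntegral.of_bounded (C := R) (hbound.mono fun θ h => h.1)⟩
  have hInt2 : Integrable D₂ π :=
    ⟨h₂meas.aestronglyMeasurable,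
      HasFiniteIntegral.of_bounded (C := R) (hbound.mono fun θ h => h.2.1)⟩
  -- coordinate integrability
  have hInt1j : ∀ j, Integrable (fun θ => D₁ θ j) π := fun j =>
    ⟨(h₁meas.eval).aestronglyMeasurable,
      HasFiniteIntegral.of_bounded (C := R) (hb1.mono fun θ h => by simpa using h j)⟩
  have hInt2j : ∀ j, Integrable (fun θ => D₂ θ j) π := fun j =>
    ⟨(h₂meas.eval).aestronglyMeasurable,
      HasFiniteIntegral.of_bounded (C := R) (hb2.mono fun θ h => by simpa using h j)⟩
  have hInt1sq : ∀ j, Integrable (fun θ => (D₁ θ j) ^ 2) π := fun j =>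
    ⟨((h₁meas.eval).pow_const 2).aestronglyMeasurable,
      HasFiniteIntegral.of_bounded (C := R ^ 2) (hb1.mono fun θ h => by
        have := h j
        simp only [Real.norm_eq_abs, abs_pow, sq_abs] at *
        calc (D₁ θ j) ^ 2 = |D₁ θ j| ^ 2 := (sq_abs _).symm
        _ ≤ R ^ 2 := by exact pow_le_pow_left₀ (abs_nonneg _) this 2)⟩
  have hInt2sq : ∀ j, Integrable (fun θ => (D₂ θ j) ^ 2) π := fun j =>
    ⟨((h₂meas.eval).pow_const 2).aestronglyMeasurable,
      HasFiniteIntegral.of_bounded (C := R ^ 2) (hb2.mono fun θ h => by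
        have := h j
        simp only [Real.norm_eq_abs, abs_pow, sq_abs] at *
        calc (D₂ θ j) ^ 2 = |D₂ θ j| ^ 2 := (sq_abs _).symm
        _ ≤ R ^ 2 := by exact pow_le_pow_left₀ (abs_nonneg _) this 2)⟩
  -- means are coordinate integrals
  have hm1j : ∀ j, m₁ j = ∫ θ, D₁ θ j ∂π := by
    intro j
    rw [hm₁]
    exact ((ContinuousLinearMap.proj (R := ℝ) (φ := fun _ : Fin N => ℝ)
      j).integral_comp_comm hInt1).symm
  have hm2j : ∀ j, m₂ j = ∫ θ, D₂ θ j ∂π := by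
    intro j
    rw [hm₂]
    exact ((ContinuousLinearMap.proj (R := ℝ) (φ := fun _ : Fin N => ℝ)
      j).integral_comp_comm hInt2).symm
  -- bounds on means
  have hm1b : ∀ j, |m₁ j| ≤ R := by
    intro j
    rw [hm1j j]
    have := norm_integral_le_of_norm_le_const (μ := π) (f := fun θ => D₁ θ j) (C := R)
      (hb1.mono fun θ h => by simpa using h j)
    simpa using this
  have hm2b : ∀ j, |m₂ j| ≤ R := by
    intro j
    rw [hm2j j]
    have := norm_integral_le_of_norm_le_const (μ := π) (f := fun θ => D₂ θ j) (C := R)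
      (hb2.mono fun θ h => by simpa using h j)
    simpa using this
  have hmdb : ∀ j, |m₁ j - m₂ j| ≤ δ := by
    intro j
    rw [hm1j j, hm2j j, ← integral_sub (hInt1j j) (hInt2j j)]
    have := norm_integral_le_of_norm_le_const (μ := π)
      (f := fun θ => D₁ θ j - D₂ θ j) (C := δ)
      (hbd.mono fun θ h => by simpa using h j)
    simpa using this
  -- variance decomposition per coordinate
  have hdecomp : ∀ (D : Θ → Fin N → ℝ) (m : Fin N → ℝ),
      (∀ j, Integrable (fun θ => D θ j) π) →
      (∀ j, Integrable (fun θ => (D θ j) ^ 2) π) →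
      (∀ j, m j = ∫ θ, D θ j ∂π) →
      ∀ j, ∫ θ, (D θ j - m j) ^ 2 ∂π = (∫ θ, (D θ j) ^ 2 ∂π) - (m j) ^ 2 := by
    intro D m hI hIsq hm j
    have h1 : (fun θ => (D θ j - m j) ^ 2)
        = fun θ => (D θ j) ^ 2 - (2 * m j) * D θ j + (m j) ^ 2 := by
      funext θ; ring
    have hIa : Integrable (fun θ => (D θ j) ^ 2 - (2 * m j) * D θ j) π :=
      (hIsq j).sub ((hI j).const_mul _)
    have hIb : Integrable (fun θ => (2 * m j) * D θ j) π := (hI j).const_mul _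
    rw [h1, integral_add hIa (integrable_const _),
      integral_sub (hIsq j) hIb, MeasureTheory.integral_const_mul, integral_const]
    simp [← hm j]
    ring
  -- summed integrals split coordinatewise
  have hIntsum1 : Integrable (fun θ => ∑ j : Fin N, (D₁ θ j - m₁ j) ^ 2) π := by
    apply integrable_finset_sum
    intro j _
    have : (fun θ => (D₁ θ j - m₁ j) ^ 2)
        = fun θ => (D₁ θ j) ^ 2 - (2 * m₁ j) * D₁ θ j + (m₁ j) ^ 2 := by
      funext θ; ring
    rw [this]
    exact ((hInt1sq j).sub ((hInt1j j).const_mul _)).add (integrable_const _)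
  have hIntsum2 : Integrable (fun θ => ∑ j : Fin N, (D₂ θ j - m₂ j) ^ 2) π := by
    apply integrable_finset_sum
    intro j _
    have : (fun θ => (D₂ θ j - m₂ j) ^ 2)
        = fun θ => (D₂ θ j) ^ 2 - (2 * m₂ j) * D₂ θ j + (m₂ j) ^ 2 := by
      funext θ; ring
    rw [this]
    exact ((hInt2sq j).sub ((hInt2j j).const_mul _)).add (integrable_const _)
  have hV1' : V₁ = (1 / (N : ℝ)) *
      ∑ j : Fin N, ((∫ θ, (D₁ θ j) ^ 2 ∂π) - (m₁ j) ^ 2) := by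
    rw [hV₁, integral_finset_sum]
    · congr 1
      exact Finset.sum_congr rfl fun j _ => hdecomp D₁ m₁ hInt1j hInt1sq hm1j j
    · intro j _
      have : (fun θ => (D₁ θ j - m₁ j) ^ 2)
          = fun θ => (D₁ θ j) ^ 2 - (2 * m₁ j) * D₁ θ j + (m₁ j) ^ 2 := by
        funext θ; ring
      rw [this]
      exact ((hInt1sq j).sub ((hInt1j j).const_mul _)).add (integrable_const _)
  have hV2' : V₂ = (1 / (N : ℝ)) *
      ∑ j : Fin N, ((∫ θ, (D₂ θ j) ^ 2 ∂π) - (m₂ j) ^ 2) := by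
    rw [hV₂, integral_finset_sum]
    · congr 1
      exact Finset.sum_congr rfl fun j _ => hdecomp D₂ m₂ hInt2j hInt2sq hm2j j
    · intro j _
      have : (fun θ => (D₂ θ j - m₂ j) ^ 2)
          = fun θ => (D₂ θ j) ^ 2 - (2 * m₂ j) * D₂ θ j + (m₂ j) ^ 2 := by
        funext θ; ring
      rw [this]
      exact ((hInt2sq j).sub ((hInt2j j).const_mul _)).add (integrable_const _)
  -- per-coordinate bounds on the terms
  have hsqint : ∀ j, |(∫ θ, (D₁ θ j) ^ 2 ∂π) - ∫ θ, (D₂ θ j) ^ 2 ∂π| ≤ 2 * R * δ := by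
    intro j
    rw [← integral_sub (hInt1sq j) (hInt2sq j)]
    have := norm_integral_le_of_norm_le_const (μ := π)
      (f := fun θ => (D₁ θ j) ^ 2 - (D₂ θ j) ^ 2) (C := 2 * R * δ)
      (by
        filter_upwards [hb1, hb2, hbd] with θ h1 h2 hd
        simpa using sq_diff_abs_bound (h1 j) (h2 j) (hd j))
    simpa using this
  have hmsq : ∀ j, |(m₁ j) ^ 2 - (m₂ j) ^ 2| ≤ 2 * R * δ := fun j =>
    sq_diff_abs_bound (hm1b j) (hm2b j) (hmdb j)
  -- assemble
  have hterm : ∀ j : Fin N,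
      |(((∫ θ, (D₁ θ j) ^ 2 ∂π) - (m₁ j) ^ 2) - ((∫ θ, (D₂ θ j) ^ 2 ∂π) - (m₂ j) ^ 2))|
        ≤ 4 * R * δ := by
    intro j
    have h := abs_sub (((∫ θ, (D₁ θ j) ^ 2 ∂π) - ∫ θ, (D₂ θ j) ^ 2 ∂π))
      ((m₁ j) ^ 2 - (m₂ j) ^ 2)
    calc |(((∫ θ, (D₁ θ j) ^ 2 ∂π) - (m₁ j) ^ 2) - ((∫ θ, (D₂ θ j) ^ 2 ∂π) - (m₂ j) ^ 2))|
        = |(((∫ θ, (D₁ θ j) ^ 2 ∂π) - ∫ θ, (D₂ θ j) ^ 2 ∂π) - ((m₁ j) ^ 2 - (m₂ j) ^ 2))| := by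
          ring_nf
      _ ≤ |(∫ θ, (D₁ θ j) ^ 2 ∂π) - ∫ θ, (D₂ θ j) ^ 2 ∂π| + |(m₁ j) ^ 2 - (m₂ j) ^ 2| :=
          abs_sub _ _
      _ ≤ 2 * R * δ + 2 * R * δ := add_le_add (hsqint j) (hmsq j)
      _ = 4 * R * δ := by ring
  have hNpos : (0 : ℝ) < N := by exact_mod_cast hN
  rw [hV1', hV2', ← mul_sub, ← Finset.sum_sub_distrib, abs_mul]
  have hsum : |∑ j : Fin N,
      (((∫ θ, (D₁ θ j) ^ 2 ∂π) - (m₁ j) ^ 2) - ((∫ θ, (D₂ θ j) ^ 2 ∂π) - (m₂ j) ^ 2))|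
      ≤ (N : ℝ) * (4 * R * δ) := by
    calc _ ≤ ∑ j : Fin N, |(((∫ θ, (D₁ θ j) ^ 2 ∂π) - (m₁ j) ^ 2)
        - ((∫ θ, (D₂ θ j) ^ 2 ∂π) - (m₂ j) ^ 2))| := Finset.abs_sum_le_sum_abs _ _
      _ ≤ ∑ _j : Fin N, 4 * R * δ := Finset.sum_le_sum fun j _ => hterm j
      _ = (N : ℝ) * (4 * R * δ) := by simp [mul_comm]
  calc |1 / (N : ℝ)| * |∑ j : Fin N, _| ≤ (1 / (N : ℝ)) * ((N : ℝ) * (4 * R * δ)) := by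
        rw [abs_of_pos (by positivity)]
        exact mul_le_mul_of_nonneg_left hsum (by positivity)
    _ = 4 * R * δ := by field_simp
end
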